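/- arXiv:1909.11600 — 6 statements merged into one kernel-verified Lean document; each statement's English description precedes it below -/
import Mathlib

section
/- Let (𝓢, 𝓔) be a set system with positive set costs c_s in which every element belongs to at most f sets of 𝓢. Let w be a fractional packing (nonnegative weights with W(s) = ∑_{e∈s} w(e) ≤ c_s for all s ∈ 𝓢), let α ≥ 1, and let 𝓘 ⊆ 𝓢 be a set cover of 𝓔 such that W(s) ≥ c_s/α for every s ∈ 𝓘. Then c(𝓘) ≤ α f · ∑_{e∈𝓔} w(e), and consequently c(𝓘) ≤ α f · c(𝓙) for every set cover 𝓙 ⊆ 𝓢 of 𝓔. -/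
/-!
Each set `s ∈ 𝓘` costs at most `a · W(s)`, and summing `W(s)` over `𝓘` counts every element at
most `f` times, so `c(𝓘) ≤ a f ∑_e w(e)`. Summing `W(s)` over any cover `𝓙` counts every element
at least once, so `∑_e w(e) ≤ ∑_{s ∈ 𝓙} W(s) ≤ c(𝓙)` (weak LP duality).
-/

open Finset

namespace Finset

variable {α : Type*} [DecidableEq α] {𝓔 : Finset α} {T : Finset (Finset α)} {w : α → ℝ}

theorem sum_sum_eq_sum_card_filter_mem_mul (hT : ∀ s ∈ T, s ⊆ 𝓔) :
    ∑ s ∈ T, ∑ e ∈ s, w e = ∑ e ∈ 𝓔, (#(T.filter (e ∈ ·)) : ℝ) * w e := by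
  rw [sum_comm' (t' := 𝓔) (s' := fun e => T.filter (e ∈ ·))]
  · simp only [sum_const, nsmul_eq_mul]
  · intro s e
    simp only [mem_filter]
    exact ⟨fun ⟨hs, he⟩ => ⟨⟨hs, he⟩, hT s hs he⟩, fun ⟨⟨hs, he⟩, _⟩ => ⟨hs, he⟩⟩

theorem sum_sum_le_mul_sum_of_card_filter_mem_le (hT : ∀ s ∈ T, s ⊆ 𝓔)
    (hw : ∀ e ∈ 𝓔, 0 ≤ w e) {f : ℕ} (hf : ∀ e ∈ 𝓔, #(T.filter (e ∈ ·)) ≤ f) :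
    ∑ s ∈ T, ∑ e ∈ s, w e ≤ f * ∑ e ∈ 𝓔, w e := by
  rw [sum_sum_eq_sum_card_filter_mem_mul hT, mul_sum]
  exact sum_le_sum fun e he => mul_le_mul_of_nonneg_right (mod_cast hf e he) (hw e he)

theorem sum_le_sum_sum_of_forall_exists_mem (hT : ∀ s ∈ T, s ⊆ 𝓔)
    (hw : ∀ e ∈ 𝓔, 0 ≤ w e) (hcover : ∀ e ∈ 𝓔, ∃ s ∈ T, e ∈ s) :
    ∑ e ∈ 𝓔, w e ≤ ∑ s ∈ T, ∑ e ∈ s, w e := by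
  rw [sum_sum_eq_sum_card_filter_mem_mul hT]
  refine sum_le_sum fun e he => le_mul_of_one_le_left (hw e he) ?_
  obtain ⟨s, hs, hes⟩ := hcover e he
  exact mod_cast card_pos.mpr ⟨s, mem_filter.mpr ⟨hs, hes⟩⟩

end Finset

theorem cover_cost_le_of_tight_packing_general {α : Type*} [DecidableEq α]
    (𝓢 : Finset (Finset α)) (𝓔 : Finset α) (c : Finset α → ℝ)
    (hsub : ∀ s ∈ 𝓢, s ⊆ 𝓔)
    (f : ℕ)
    (hf : ∀ e ∈ 𝓔, (𝓢.filter (fun s => e ∈ s)).card ≤ f)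
    (w : α → ℝ) (hw : ∀ e ∈ 𝓔, 0 ≤ w e)
    (hpack : ∀ s ∈ 𝓢, ∑ e ∈ s, w e ≤ c s)
    (a : ℝ) (ha : 1 ≤ a)
    (𝓘 : Finset (Finset α)) (h𝓘 : 𝓘 ⊆ 𝓢)
    (htight : ∀ s ∈ 𝓘, c s / a ≤ ∑ e ∈ s, w e) :
    (∑ s ∈ 𝓘, c s ≤ a * f * ∑ e ∈ 𝓔, w e) ∧
      (∀ 𝓙 : Finset (Finset α), 𝓙 ⊆ 𝓢 → (∀ e ∈ 𝓔, ∃ s ∈ 𝓙, e ∈ s) →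
        ∑ s ∈ 𝓘, c s ≤ a * f * ∑ s ∈ 𝓙, c s) := by
  have ha₀ : 0 < a := one_pos.trans_le ha
  have hcost : ∑ s ∈ 𝓘, c s ≤ a * f * ∑ e ∈ 𝓔, w e := calc
    ∑ s ∈ 𝓘, c s ≤ ∑ s ∈ 𝓘, a * ∑ e ∈ s, w e :=
      sum_le_sum fun s hs => (div_le_iff₀' ha₀).mp (htight s hs)
    _ = a * ∑ s ∈ 𝓘, ∑ e ∈ s, w e := (mul_sum ..).symm
    _ ≤ a * (f * ∑ e ∈ 𝓔, w e) := by
      refine mul_le_mul_of_nonneg_left ?_ ha₀.le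
      refine sum_sum_le_mul_sum_of_card_filter_mem_le (fun s hs => hsub s (h𝓘 hs)) hw
        fun e he => (card_le_card (filter_subset_filter _ h𝓘)).trans (hf e he)
    _ = a * f * ∑ e ∈ 𝓔, w e := (mul_assoc ..).symm
  refine ⟨hcost, fun 𝓙 h𝓙 hcover𝓙 => hcost.trans ?_⟩
  have hdual : ∑ e ∈ 𝓔, w e ≤ ∑ s ∈ 𝓙, c s := calc
    ∑ e ∈ 𝓔, w e ≤ ∑ s ∈ 𝓙, ∑ e ∈ s, w e :=
      sum_le_sum_sum_of_forall_exists_mem (fun s hs => hsub s (h𝓙 hs)) hw hcover𝓙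
    _ ≤ ∑ s ∈ 𝓙, c s := sum_le_sum fun s hs => hpack s (h𝓙 hs)
  exact mul_le_mul_of_nonneg_left hdual (by positivity)

/-- If `w` is a fractional packing, `𝓘 ⊆ 𝓢` is a set cover of `𝓔` all of whose sets `s`
satisfy `W(s) ≥ c_s / a` for some `a ≥ 1`, and every element lies in at most `f` sets,
then `c(𝓘) ≤ a·f·∑_{e∈𝓔} w(e)`, and consequently `c(𝓘) ≤ a·f·c(𝓙)` for every set cover
`𝓙 ⊆ 𝓢` of `𝓔`. -/
theorem cover_cost_le_of_tight_packing {α : Type*} [DecidableEq α]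
    (𝓢 : Finset (Finset α)) (𝓔 : Finset α) (c : Finset α → ℝ)
    (hsub : ∀ s ∈ 𝓢, s ⊆ 𝓔)
    (hc : ∀ s ∈ 𝓢, 0 < c s)
    (f : ℕ)
    (hf : ∀ e ∈ 𝓔, (𝓢.filter (fun s => e ∈ s)).card ≤ f)
    (w : α → ℝ) (hw : ∀ e ∈ 𝓔, 0 ≤ w e)
    (hpack : ∀ s ∈ 𝓢, ∑ e ∈ s, w e ≤ c s)
    (a : ℝ) (ha : 1 ≤ a)
    (𝓘 : Finset (Finset α)) (h𝓘 : 𝓘 ⊆ 𝓢)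
    (hcover𝓘 : ∀ e ∈ 𝓔, ∃ s ∈ 𝓘, e ∈ s)
    (htight : ∀ s ∈ 𝓘, c s / a ≤ ∑ e ∈ s, w e) :
    (∑ s ∈ 𝓘, c s ≤ a * f * ∑ e ∈ 𝓔, w e) ∧
      (∀ 𝓙 : Finset (Finset α), 𝓙 ⊆ 𝓢 → (∀ e ∈ 𝓔, ∃ s ∈ 𝓙, e ∈ s) →
        ∑ s ∈ 𝓘, c s ≤ a * f * ∑ s ∈ 𝓙, c s) :=
  cover_cost_le_of_tight_packing_general 𝓢 𝓔 c hsub f hf w hw hpack a ha 𝓘 h𝓘 htight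
end

section
/- Let (𝓢, 𝓔) be a set system with positive set costs c_s in which every element belongs to at most f sets of 𝓢, let ε > 0, let δ ≥ 0, and let w be the uniform weight function with w(e) = δ for all e ∈ 𝓔. Suppose w is a fractional packing on (𝓢, 𝓔) (i.e., ∑_{e∈s} w(e) ≤ c_s for all s ∈ 𝓢), and suppose 𝓘 ⊆ 𝓢 is a set cover of 𝓔 with ∑_{e∈s} w(e) ≥ c_s for every s ∈ 𝓘. Let D ⊆ 𝓔 and 𝓔' = 𝓔 \ D, and assume |D| ≤ ε·|𝓔'|. Then c(𝓘) ≤ (1+ε) f · c(𝓙) for every set cover 𝓙 ⊆ 𝓢 of 𝓔'. -/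
/-!
Weak duality with a frequency factor: a family `𝓘` of tight sets costs at most its total weight
counted with multiplicity, hence at most `f · w(𝓔)`, while any cover `𝓙` of `𝓔'` costs at least
`w(𝓔')` because `w` is a packing. For uniform weights `w(𝓔) = δ |𝓔|` and `w(𝓔') = δ |𝓔'|`,
and the deletion budget `|D| ≤ ε |𝓔'|` gives `|𝓔| ≤ (1 + ε) |𝓔'|`.
-/

open Finset

section

variable {α : Type*} [DecidableEq α]

theorem sum_sum_le_mul_sum_of_frequency_le {𝓘 : Finset (Finset α)} {𝓔 : Finset α} {f : ℕ}
    {w : α → ℝ} (hsub : ∀ s ∈ 𝓘, s ⊆ 𝓔) (hf : ∀ e ∈ 𝓔, #(𝓘.filter (fun s => e ∈ s)) ≤ f)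
    (hw : ∀ e ∈ 𝓔, 0 ≤ w e) :
    ∑ s ∈ 𝓘, ∑ e ∈ s, w e ≤ f * ∑ e ∈ 𝓔, w e := by
  have hcount : ∑ s ∈ 𝓘, ∑ e ∈ s, w e = ∑ e ∈ 𝓔, #(𝓘.filter (fun s => e ∈ s)) * w e := by
    rw [sum_comm' (t' := 𝓔) (s' := fun e => 𝓘.filter (fun s => e ∈ s))]
    · simp only [sum_const, nsmul_eq_mul]
    · intro s e
      simp only [mem_filter]
      exact ⟨fun ⟨hs, he⟩ => ⟨⟨hs, he⟩, hsub s hs he⟩, fun ⟨h, _⟩ => h⟩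
  rw [hcount, mul_sum]
  gcongr with e he
  · exact hw e he
  · exact_mod_cast hf e he

theorem sum_le_sum_sum_of_cover {𝓙 : Finset (Finset α)} {E : Finset α} {w : α → ℝ}
    (hcover : ∀ e ∈ E, ∃ s ∈ 𝓙, e ∈ s) (hw : ∀ s ∈ 𝓙, ∀ e ∈ s, 0 ≤ w e) :
    ∑ e ∈ E, w e ≤ ∑ s ∈ 𝓙, ∑ e ∈ s, w e := by
  choose! g hg𝓙 hgmem using hcover
  rw [← sum_fiberwise_of_maps_to hg𝓙]
  refine sum_le_sum fun s hs => sum_le_sum_of_subset_of_nonneg (fun e he => ?_)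
    (fun e he _ => hw s hs e he)
  obtain ⟨heE, rfl⟩ := mem_filter.mp he
  exact hgmem e heE

theorem cost_le_mul_sum_of_tight_cover {𝓘 : Finset (Finset α)} {𝓔 : Finset α}
    {c : Finset α → ℝ} {f : ℕ} {w : α → ℝ} (hsub : ∀ s ∈ 𝓘, s ⊆ 𝓔)
    (hf : ∀ e ∈ 𝓔, #(𝓘.filter (fun s => e ∈ s)) ≤ f) (hw : ∀ e ∈ 𝓔, 0 ≤ w e)
    (htight : ∀ s ∈ 𝓘, c s ≤ ∑ e ∈ s, w e) :
    ∑ s ∈ 𝓘, c s ≤ f * ∑ e ∈ 𝓔, w e :=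
  (sum_le_sum htight).trans (sum_sum_le_mul_sum_of_frequency_le hsub hf hw)

theorem sum_le_cost_of_cover {𝓙 : Finset (Finset α)} {E : Finset α} {c : Finset α → ℝ}
    {w : α → ℝ} (hcover : ∀ e ∈ E, ∃ s ∈ 𝓙, e ∈ s) (hw : ∀ s ∈ 𝓙, ∀ e ∈ s, 0 ≤ w e)
    (hpack : ∀ s ∈ 𝓙, ∑ e ∈ s, w e ≤ c s) :
    ∑ e ∈ E, w e ≤ ∑ s ∈ 𝓙, c s :=
  (sum_le_sum_sum_of_cover hcover hw).trans (sum_le_sum hpack)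

theorem card_le_one_add_mul_card_sdiff {E D : Finset α} {ε : ℝ} (hD : D ⊆ E)
    (hsize : (#D : ℝ) ≤ ε * #(E \ D)) :
    (#E : ℝ) ≤ (1 + ε) * #(E \ D) := by
  have hcard : (#E : ℝ) = #(E \ D) + #D := by
    exact_mod_cast (card_sdiff_add_card_eq_card hD).symm
  linarith

end

theorem batch_deletion_uniform_weights_general {α : Type*} [DecidableEq α]
    (𝓢 : Finset (Finset α)) (𝓔 : Finset α) (c : Finset α → ℝ)
    (hsub : ∀ s ∈ 𝓢, s ⊆ 𝓔)
    (f : ℕ)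
    (hf : ∀ e ∈ 𝓔, (𝓢.filter (fun s => e ∈ s)).card ≤ f)
    (ε : ℝ) (hε : 0 < ε)
    (δ : ℝ) (hδ : 0 ≤ δ)
    (w : α → ℝ) (hw : ∀ e ∈ 𝓔, w e = δ)
    (hpack : ∀ s ∈ 𝓢, ∑ e ∈ s, w e ≤ c s)
    (𝓘 : Finset (Finset α)) (h𝓘 : 𝓘 ⊆ 𝓢)
    (htight : ∀ s ∈ 𝓘, c s ≤ ∑ e ∈ s, w e)
    (D : Finset α) (hD : D ⊆ 𝓔)
    (hsize : (D.card : ℝ) ≤ ε * ((𝓔 \ D).card : ℝ)) :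
    ∀ 𝓙 : Finset (Finset α), 𝓙 ⊆ 𝓢 → (∀ e ∈ 𝓔 \ D, ∃ s ∈ 𝓙, e ∈ s) →
      ∑ s ∈ 𝓘, c s ≤ (1 + ε) * f * ∑ s ∈ 𝓙, c s := by
  intro 𝓙 h𝓙 hcover𝓙
  have hw_nonneg : ∀ e ∈ 𝓔, 0 ≤ w e := fun e he => (hw e he).symm ▸ hδ
  have hf𝓘 : ∀ e ∈ 𝓔, #(𝓘.filter (fun s => e ∈ s)) ≤ f :=
    fun e he => (card_le_card (filter_subset_filter _ h𝓘)).trans (hf e he)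
  have hcost𝓘 := cost_le_mul_sum_of_tight_cover (fun s hs => hsub s (h𝓘 hs)) hf𝓘 hw_nonneg htight
  have hcost𝓙 := sum_le_cost_of_cover hcover𝓙
    (fun s hs e he => hw_nonneg e (hsub s (h𝓙 hs) he)) (fun s hs => hpack s (h𝓙 hs))
  rw [sum_congr rfl hw, sum_const, nsmul_eq_mul] at hcost𝓘
  rw [sum_congr rfl fun e he => hw e (sdiff_subset he), sum_const, nsmul_eq_mul] at hcost𝓙
  have hcard := card_le_one_add_mul_card_sdiff hD hsize
  calc ∑ s ∈ 𝓘, c s ≤ f * (#𝓔 * δ) := hcost𝓘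
    _ ≤ f * ((1 + ε) * #(𝓔 \ D) * δ) := by gcongr
    _ = (1 + ε) * f * (#(𝓔 \ D) * δ) := by ring
    _ ≤ (1 + ε) * f * ∑ s ∈ 𝓙, c s := by gcongr

/-- Batch deletion with uniform weights: if `w(e) = δ` for all `e ∈ 𝓔` is a fractional
packing, `𝓘 ⊆ 𝓢` is a set cover of `𝓔` consisting of tight sets (`W(s) ≥ c_s`), and at
most an `ε` fraction (relative to `𝓔' = 𝓔 \ D`) of elements is deleted
(`|D| ≤ ε·|𝓔'|`), then `c(𝓘) ≤ (1+ε)·f·c(𝓙)` for every set cover `𝓙 ⊆ 𝓢` of `𝓔'`. -/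
theorem batch_deletion_uniform_weights {α : Type*} [DecidableEq α]
    (𝓢 : Finset (Finset α)) (𝓔 : Finset α) (c : Finset α → ℝ)
    (hsub : ∀ s ∈ 𝓢, s ⊆ 𝓔)
    (hc : ∀ s ∈ 𝓢, 0 < c s)
    (f : ℕ)
    (hf : ∀ e ∈ 𝓔, (𝓢.filter (fun s => e ∈ s)).card ≤ f)
    (ε : ℝ) (hε : 0 < ε)
    (δ : ℝ) (hδ : 0 ≤ δ)
    (w : α → ℝ) (hw : ∀ e ∈ 𝓔, w e = δ)
    (hpack : ∀ s ∈ 𝓢, ∑ e ∈ s, w e ≤ c s)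
    (𝓘 : Finset (Finset α)) (h𝓘 : 𝓘 ⊆ 𝓢)
    (hcover𝓘 : ∀ e ∈ 𝓔, ∃ s ∈ 𝓘, e ∈ s)
    (htight : ∀ s ∈ 𝓘, c s ≤ ∑ e ∈ s, w e)
    (D : Finset α) (hD : D ⊆ 𝓔)
    (hsize : (D.card : ℝ) ≤ ε * ((𝓔 \ D).card : ℝ)) :
    ∀ 𝓙 : Finset (Finset α), 𝓙 ⊆ 𝓢 → (∀ e ∈ 𝓔 \ D, ∃ s ∈ 𝓙, e ∈ s) →
      ∑ s ∈ 𝓘, c s ≤ (1 + ε) * f * ∑ s ∈ 𝓙, c s :=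
  batch_deletion_uniform_weights_general 𝓢 𝓔 c hsub f hf ε hε δ hδ w hw hpack 𝓘 h𝓘 htight D hD hsize
end

section
/- Let (𝓢, 𝓔) be a set system with positive set costs c_s in which every element belongs to at most f sets of 𝓢, and let ε > 0. Let w be a nonnegative weight function on 𝓔 such that W(s) = ∑_{e∈s} w(e) satisfies 0 ≤ W(s) ≤ c_s for every s ∈ 𝓢, and such that every element e ∈ 𝓔 is contained in at least one tight set, i.e., a set s with (1+ε)^{-1} c_s ≤ W(s) ≤ c_s. Then the collection 𝓢_tight = {s ∈ 𝓢 : (1+ε)^{-1} c_s ≤ W(s) ≤ c_s} is a set cover of 𝓔 and satisfies c(𝓢_tight) ≤ (1+ε) f · c(𝓙) for every set cover 𝓙 ⊆ 𝓢 of 𝓔; that is, 𝓢_tight is a (1+ε)f-approximate minimum set cover of (𝓢, 𝓔). -/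
/-!
Weak LP duality for set cover: a weight function `w ≥ 0` with `W(s) ≤ c_s` for all `s`
has total weight at most the cost of any cover, since every element is counted by at least
one set of the cover. Conversely each tight set costs at most `(1+ε) W(s)`, and summing
`W(s)` over the tight sets counts every element at most `f` times, so the tight sets cost at
most `(1+ε) f ∑ w ≤ (1+ε) f c(𝓙)`.
-/

open Finset

section DoubleCounting

variable {α : Type*} [DecidableEq α] {𝓐 : Finset (Finset α)} {E : Finset α} {w : α → ℝ}

theorem sum_sum_eq_sum_card_filter_mul (h𝓐 : ∀ s ∈ 𝓐, s ⊆ E) :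
    ∑ s ∈ 𝓐, ∑ e ∈ s, w e = ∑ e ∈ E, (#(𝓐.filter (fun s => e ∈ s)) : ℝ) * w e := by
  rw [sum_comm' (s' := fun e => 𝓐.filter (fun s => e ∈ s)) (t' := E)]
  · simp only [sum_const, nsmul_eq_mul]
  · intro s e
    rw [mem_filter]
    exact ⟨fun ⟨hs, he⟩ => ⟨⟨hs, he⟩, h𝓐 s hs he⟩, fun ⟨⟨hs, he⟩, _⟩ => ⟨hs, he⟩⟩

theorem sum_le_sum_sum_of_covers (h𝓐 : ∀ s ∈ 𝓐, s ⊆ E) (hw : ∀ e ∈ E, 0 ≤ w e)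
    (hcover : ∀ e ∈ E, ∃ s ∈ 𝓐, e ∈ s) :
    ∑ e ∈ E, w e ≤ ∑ s ∈ 𝓐, ∑ e ∈ s, w e := by
  rw [sum_sum_eq_sum_card_filter_mul h𝓐]
  refine sum_le_sum fun e he => le_mul_of_one_le_left (hw e he) ?_
  obtain ⟨s, hs, hes⟩ := hcover e he
  exact_mod_cast card_pos.2 ⟨s, mem_filter.2 ⟨hs, hes⟩⟩

theorem sum_sum_le_mul_sum_of_card_filter_le (h𝓐 : ∀ s ∈ 𝓐, s ⊆ E) (hw : ∀ e ∈ E, 0 ≤ w e)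
    {f : ℕ} (hf : ∀ e ∈ E, #(𝓐.filter (fun s => e ∈ s)) ≤ f) :
    ∑ s ∈ 𝓐, ∑ e ∈ s, w e ≤ f * ∑ e ∈ E, w e := by
  rw [sum_sum_eq_sum_card_filter_mul h𝓐, mul_sum]
  exact sum_le_sum fun e he => mul_le_mul_of_nonneg_right (by exact_mod_cast hf e he) (hw e he)

end DoubleCounting

theorem sum_le_mul_sum_of_inv_mul_le {ι : Type*} {𝓣 : Finset ι} {c g : ι → ℝ} {a : ℝ}
    (ha : 0 < a) (h : ∀ s ∈ 𝓣, a⁻¹ * c s ≤ g s) : ∑ s ∈ 𝓣, c s ≤ a * ∑ s ∈ 𝓣, g s := by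
  rw [mul_sum]
  exact sum_le_sum fun s hs => (inv_mul_le_iff₀ ha).1 (h s hs)

theorem tight_sets_approx_min_cover_general {α : Type*} [DecidableEq α]
    (𝓢 : Finset (Finset α)) (𝓔 : Finset α) (c : Finset α → ℝ)
    (hsub : ∀ s ∈ 𝓢, s ⊆ 𝓔)
    (f : ℕ)
    (hf : ∀ e ∈ 𝓔, (𝓢.filter (fun s => e ∈ s)).card ≤ f)
    (ε : ℝ) (hε : 0 < ε)
    (w : α → ℝ) (hw : ∀ e ∈ 𝓔, 0 ≤ w e)
    (hpack : ∀ s ∈ 𝓢, ∑ e ∈ s, w e ≤ c s)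
    (helem : ∀ e ∈ 𝓔, ∃ s ∈ 𝓢, e ∈ s ∧
      (1 + ε)⁻¹ * c s ≤ ∑ e' ∈ s, w e' ∧ ∑ e' ∈ s, w e' ≤ c s)
    (𝓣 : Finset (Finset α))
    (h𝓣 : ∀ s, s ∈ 𝓣 ↔ s ∈ 𝓢 ∧
      (1 + ε)⁻¹ * c s ≤ ∑ e' ∈ s, w e' ∧ ∑ e' ∈ s, w e' ≤ c s) :
    (∀ e ∈ 𝓔, ∃ s ∈ 𝓣, e ∈ s) ∧
      (∀ 𝓙 : Finset (Finset α), 𝓙 ⊆ 𝓢 → (∀ e ∈ 𝓔, ∃ s ∈ 𝓙, e ∈ s) →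
        ∑ s ∈ 𝓣, c s ≤ (1 + ε) * f * ∑ s ∈ 𝓙, c s) := by
  have h𝓣𝓢 : 𝓣 ⊆ 𝓢 := fun s hs => ((h𝓣 s).1 hs).1
  have hε' : 0 < 1 + ε := by linarith
  refine ⟨fun e he => ?_, fun 𝓙 h𝓙𝓢 h𝓙 => ?_⟩
  · obtain ⟨s, hs, hes, htight⟩ := helem e he
    exact ⟨s, (h𝓣 s).2 ⟨hs, htight⟩, hes⟩
  have hfreq : ∀ e ∈ 𝓔, #(𝓣.filter (fun s => e ∈ s)) ≤ f := fun e he =>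
    (card_le_card (filter_subset_filter _ h𝓣𝓢)).trans (hf e he)
  have hduality : ∑ e ∈ 𝓔, w e ≤ ∑ s ∈ 𝓙, c s :=
    (sum_le_sum_sum_of_covers (fun s hs => hsub s (h𝓙𝓢 hs)) hw h𝓙).trans
      (sum_le_sum fun s hs => hpack s (h𝓙𝓢 hs))
  calc ∑ s ∈ 𝓣, c s ≤ (1 + ε) * ∑ s ∈ 𝓣, ∑ e ∈ s, w e :=
        sum_le_mul_sum_of_inv_mul_le hε' fun s hs => ((h𝓣 s).1 hs).2.1
    _ ≤ (1 + ε) * (f * ∑ e ∈ 𝓔, w e) := by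
        gcongr
        exact sum_sum_le_mul_sum_of_card_filter_le (fun s hs => hsub s (h𝓣𝓢 hs)) hw hfreq
    _ ≤ (1 + ε) * (f * ∑ s ∈ 𝓙, c s) := by gcongr
    _ = (1 + ε) * f * ∑ s ∈ 𝓙, c s := by ring

/-- The tight sets `𝓢_tight = {s ∈ 𝓢 : (1+ε)⁻¹ c_s ≤ W(s) ≤ c_s}` form a set cover of
`𝓔` which is a `(1+ε)f`-approximate minimum set cover, provided `0 ≤ W(s) ≤ c_s` for
every `s ∈ 𝓢` and every element is contained in at least one tight set. -/
theorem tight_sets_approx_min_cover {α : Type*} [DecidableEq α]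
    (𝓢 : Finset (Finset α)) (𝓔 : Finset α) (c : Finset α → ℝ)
    (hsub : ∀ s ∈ 𝓢, s ⊆ 𝓔)
    (hc : ∀ s ∈ 𝓢, 0 < c s)
    (f : ℕ)
    (hf : ∀ e ∈ 𝓔, (𝓢.filter (fun s => e ∈ s)).card ≤ f)
    (ε : ℝ) (hε : 0 < ε)
    (w : α → ℝ) (hw : ∀ e ∈ 𝓔, 0 ≤ w e)
    (hpack : ∀ s ∈ 𝓢, ∑ e ∈ s, w e ≤ c s)
    (helem : ∀ e ∈ 𝓔, ∃ s ∈ 𝓢, e ∈ s ∧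
      (1 + ε)⁻¹ * c s ≤ ∑ e' ∈ s, w e' ∧ ∑ e' ∈ s, w e' ≤ c s)
    (𝓣 : Finset (Finset α))
    (h𝓣 : ∀ s, s ∈ 𝓣 ↔ s ∈ 𝓢 ∧
      (1 + ε)⁻¹ * c s ≤ ∑ e' ∈ s, w e' ∧ ∑ e' ∈ s, w e' ≤ c s) :
    (∀ e ∈ 𝓔, ∃ s ∈ 𝓣, e ∈ s) ∧
      (∀ 𝓙 : Finset (Finset α), 𝓙 ⊆ 𝓢 → (∀ e ∈ 𝓔, ∃ s ∈ 𝓙, e ∈ s) →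
        ∑ s ∈ 𝓣, c s ≤ (1 + ε) * f * ∑ s ∈ 𝓙, c s) :=
  tight_sets_approx_min_cover_general 𝓢 𝓔 c hsub f hf ε hε w hw hpack helem 𝓣 h𝓣
end

section
/- Let A and D be disjoint finite sets of elements, let ε > 0, let L be a natural number, and let ℓ assign to each element e ∈ A ∪ D a level ℓ(e) ∈ {0, 1, …, L}. Let w be a weight function such that w(e) = (1+ε)^{-ℓ(e)} for every e ∈ A and 0 ≤ w(e) ≤ (1+ε)^{-ℓ(e)} for every e ∈ D. If |{e ∈ D : ℓ(e) ≤ k}| ≤ 2ε·|{e ∈ A : ℓ(e) ≤ k}| for every k ∈ {0, 1, …, L}, then ∑_{e∈D} w(e) ≤ 2ε · ∑_{e∈A} w(e). -/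
/-!
Abel summation over levels: writing `g k = (1+ε)^(-k)`, the sum `∑_{e ∈ S} g (ℓ e)` equals
`g L · |S| + ∑_{k < L} (g k - g (k+1)) · |S_{≤k}|`. Since `g` is decreasing and nonnegative, every
coefficient is nonnegative, so the level-wise bounds `|D_{≤k}| ≤ 2ε·|A_{≤k}|` add up to the bound
on the weights.
-/

open Finset

section Levels

variable {α R : Type*} [CommRing R] (ℓ : α → ℕ) {L : ℕ}

theorem eq_add_sum_Ico_sub_succ (g : ℕ → R) {m n : ℕ} (hmn : m ≤ n) :
    g m = g n + ∑ k ∈ Ico m n, (g k - g (k + 1)) := by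
  simp only [← neg_sub (g (_ + 1)), sum_neg_distrib, sum_Ico_sub g hmn]
  abel

theorem sum_comp_eq_by_parts (g : ℕ → R) (S : Finset α) (hS : ∀ e ∈ S, ℓ e ≤ L) :
    ∑ e ∈ S, g (ℓ e) =
      g L * #S + ∑ k ∈ range L, (g k - g (k + 1)) * #{e ∈ S | ℓ e ≤ k} := by
  have hswap : ∑ e ∈ S, ∑ k ∈ Ico (ℓ e) L, (g k - g (k + 1)) =
      ∑ k ∈ range L, ∑ e ∈ S with ℓ e ≤ k, (g k - g (k + 1)) :=
    sum_comm' fun e k => by simp only [mem_Ico, mem_range, mem_filter]; tauto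
  rw [sum_congr rfl fun e he => eq_add_sum_Ico_sub_succ g (hS e he), sum_add_distrib, hswap]
  simp only [sum_const, nsmul_eq_mul, mul_comm]

variable [LinearOrder R] [IsStrictOrderedRing R]

theorem sum_comp_le_mul_sum_comp_of_card_filter_le {g : ℕ → R} (hg : Antitone g)
    (hgL : 0 ≤ g L) {S T : Finset α} (hS : ∀ e ∈ S, ℓ e ≤ L) (hT : ∀ e ∈ T, ℓ e ≤ L) (c : R)
    (hcount : ∀ k : ℕ, k ≤ L → (#{e ∈ T | ℓ e ≤ k} : R) ≤ c * #{e ∈ S | ℓ e ≤ k}) :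
    ∑ e ∈ T, g (ℓ e) ≤ c * ∑ e ∈ S, g (ℓ e) := by
  have hcard : ∀ U : Finset α, (∀ e ∈ U, ℓ e ≤ L) → #U = #{e ∈ U | ℓ e ≤ L} :=
    fun U hU => by rw [filter_true_of_mem hU]
  rw [sum_comp_eq_by_parts ℓ g T hT, sum_comp_eq_by_parts ℓ g S hS, hcard T hT, hcard S hS]
  calc _ ≤ g L * (c * #{e ∈ S | ℓ e ≤ L}) +
        ∑ k ∈ range L, (g k - g (k + 1)) * (c * #{e ∈ S | ℓ e ≤ k}) := by
        gcongr with k hk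
        · exact hcount L le_rfl
        · exact sub_nonneg.2 (hg k.le_succ)
        · exact hcount k (mem_range.1 hk).le
    _ = _ := by simp only [mul_add, mul_sum, mul_left_comm c]

end Levels

theorem dead_weight_le_active_weight_general {α : Type*} [DecidableEq α]
    (A D : Finset α)
    (ε : ℝ) (hε : 0 < ε)
    (L : ℕ) (ℓ : α → ℕ) (hℓ : ∀ e ∈ A ∪ D, ℓ e ≤ L)
    (w : α → ℝ)
    (hwA : ∀ e ∈ A, w e = (1 + ε) ^ (-(ℓ e : ℤ)))
    (hwD : ∀ e ∈ D, 0 ≤ w e ∧ w e ≤ (1 + ε) ^ (-(ℓ e : ℤ)))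
    (hcount : ∀ k : ℕ, k ≤ L →
      ((D.filter (fun e => ℓ e ≤ k)).card : ℝ) ≤
        2 * ε * ((A.filter (fun e => ℓ e ≤ k)).card : ℝ)) :
    ∑ e ∈ D, w e ≤ 2 * ε * ∑ e ∈ A, w e := by
  set g : ℕ → ℝ := fun k => (1 + ε) ^ (-(k : ℤ))
  have hg : Antitone g := fun m n hmn =>
    zpow_le_zpow_right₀ (by linarith) (neg_le_neg (Nat.cast_le.2 hmn))
  calc ∑ e ∈ D, w e ≤ ∑ e ∈ D, g (ℓ e) := sum_le_sum fun e he => (hwD e he).2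
    _ ≤ 2 * ε * ∑ e ∈ A, g (ℓ e) :=
      sum_comp_le_mul_sum_comp_of_card_filter_le ℓ hg (by positivity)
        (fun e he => hℓ e (mem_union_left D he)) (fun e he => hℓ e (mem_union_right A he))
        (2 * ε) hcount
    _ = 2 * ε * ∑ e ∈ A, w e := by rw [sum_congr rfl hwA]

/-- Level-wise comparison of dead and active weights: if each active element `e ∈ A` has
weight exactly `(1+ε)^{-ℓ(e)}`, each dead element `e ∈ D` has weight at most
`(1+ε)^{-ℓ(e)}`, and for every level `k ≤ L` we have `|D_{≤k}| ≤ 2ε·|A_{≤k}|`, then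
`w(D) ≤ 2ε·w(A)`. -/
theorem dead_weight_le_active_weight {α : Type*} [DecidableEq α]
    (A D : Finset α) (hAD : Disjoint A D)
    (ε : ℝ) (hε : 0 < ε)
    (L : ℕ) (ℓ : α → ℕ) (hℓ : ∀ e ∈ A ∪ D, ℓ e ≤ L)
    (w : α → ℝ)
    (hwA : ∀ e ∈ A, w e = (1 + ε) ^ (-(ℓ e : ℤ)))
    (hwD : ∀ e ∈ D, 0 ≤ w e ∧ w e ≤ (1 + ε) ^ (-(ℓ e : ℤ)))
    (hcount : ∀ k : ℕ, k ≤ L →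
      ((D.filter (fun e => ℓ e ≤ k)).card : ℝ) ≤
        2 * ε * ((A.filter (fun e => ℓ e ≤ k)).card : ℝ)) :
    ∑ e ∈ D, w e ≤ 2 * ε * ∑ e ∈ A, w e :=
  dead_weight_le_active_weight_general A D ε hε L ℓ hℓ w hwA hwD hcount
end

section
/- Let 𝓢 be a finite collection of sets over a finite universe 𝓔* of elements, with positive set costs c_s, in which every element belongs to at most f sets of 𝓢, and let ε > 0. Let w be a nonnegative weight function on 𝓔* and write W*(s) = ∑_{e∈s} w(e). Suppose every element e ∈ 𝓔* is contained in at least one set s with (1+ε)^{-1} c_s ≤ W*(s) ≤ c_s. Then ∑_{e∈𝓔*} w(e) ≥ ((1+ε) f)^{-1} · c(𝓢*_tight), where 𝓢*_tight = {s ∈ 𝓢 : (1+ε)^{-1} c_s ≤ W*(s) ≤ c_s}. -/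
/-! A tight set costs at most `(1 + ε) W*(s)`, and summing `W*(s)` over the tight sets counts
the weight of each element at most `f` times, since it lies in at most `f` sets. -/

open Finset

theorem Finset.sum_sum_inter_le_mul_sum {α R : Type*} [DecidableEq α] [CommSemiring R]
    [PartialOrder R] [IsOrderedRing R] {s : Finset α} {B : Finset (Finset α)} {n : ℕ}
    {w : α → R} (hw : ∀ a ∈ s, 0 ≤ w a) (h : ∀ a ∈ s, #{t ∈ B | a ∈ t} ≤ n) :
    ∑ t ∈ B, ∑ a ∈ s ∩ t, w a ≤ n * ∑ a ∈ s, w a := by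
  calc ∑ t ∈ B, ∑ a ∈ s ∩ t, w a = ∑ a ∈ s, #{t ∈ B | a ∈ t} * w a := by
        simp_rw [← filter_mem_eq_inter, sum_filter]
        rw [sum_comm]
        simp_rw [← sum_filter, sum_const, nsmul_eq_mul]
    _ ≤ ∑ a ∈ s, n * w a := by
        gcongr with a ha
        · exact hw a ha
        · exact h a ha
    _ = n * ∑ a ∈ s, w a := (mul_sum ..).symm

theorem total_weight_ge_tight_cost_general {α : Type*} [DecidableEq α]
    (𝓢 : Finset (Finset α)) (𝓔star : Finset α) (c : Finset α → ℝ)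
    (hsub : ∀ s ∈ 𝓢, s ⊆ 𝓔star)
    (f : ℕ)
    (hf : ∀ e ∈ 𝓔star, (𝓢.filter (fun s => e ∈ s)).card ≤ f)
    (ε : ℝ) (hε : 0 < ε)
    (w : α → ℝ) (hw : ∀ e ∈ 𝓔star, 0 ≤ w e)
    (𝓣 : Finset (Finset α))
    (h𝓣 : ∀ s, s ∈ 𝓣 ↔ s ∈ 𝓢 ∧
      (1 + ε)⁻¹ * c s ≤ ∑ e' ∈ s, w e' ∧ ∑ e' ∈ s, w e' ≤ c s) :
    ((1 + ε) * f)⁻¹ * ∑ s ∈ 𝓣, c s ≤ ∑ e ∈ 𝓔star, w e := by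
  have h𝓣𝓢 : 𝓣 ⊆ 𝓢 := fun s hs => ((h𝓣 s).1 hs).1
  have hcost : ∀ s ∈ 𝓣, c s ≤ (1 + ε) * ∑ e ∈ 𝓔star ∩ s, w e := fun s hs => by
    rw [inter_eq_right.2 (hsub s (h𝓣𝓢 hs)), ← inv_mul_le_iff₀ (by positivity)]
    exact ((h𝓣 s).1 hs).2.1
  have hfreq : ∀ e ∈ 𝓔star, #{s ∈ 𝓣 | e ∈ s} ≤ f := fun e he =>
    (card_le_card (filter_subset_filter _ h𝓣𝓢)).trans (hf e he)
  refine inv_mul_le_of_le_mul₀ (by positivity) (sum_nonneg hw) ?_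
  calc ∑ s ∈ 𝓣, c s ≤ (1 + ε) * ∑ s ∈ 𝓣, ∑ e ∈ 𝓔star ∩ s, w e := by
        rw [mul_sum]
        exact sum_le_sum hcost
    _ ≤ (1 + ε) * (f * ∑ e ∈ 𝓔star, w e) := by
        gcongr
        exact sum_sum_inter_le_mul_sum hw hfreq
    _ = (1 + ε) * f * ∑ e ∈ 𝓔star, w e := (mul_assoc ..).symm

/-- If every element of `𝓔*` is contained in at least one tight set (a set `s` with
`(1+ε)⁻¹ c_s ≤ W*(s) ≤ c_s`), then the total element weight is at least
`((1+ε)·f)⁻¹` times the cost of the collection of tight sets. -/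
theorem total_weight_ge_tight_cost {α : Type*} [DecidableEq α]
    (𝓢 : Finset (Finset α)) (𝓔star : Finset α) (c : Finset α → ℝ)
    (hsub : ∀ s ∈ 𝓢, s ⊆ 𝓔star)
    (hc : ∀ s ∈ 𝓢, 0 < c s)
    (f : ℕ)
    (hf : ∀ e ∈ 𝓔star, (𝓢.filter (fun s => e ∈ s)).card ≤ f)
    (ε : ℝ) (hε : 0 < ε)
    (w : α → ℝ) (hw : ∀ e ∈ 𝓔star, 0 ≤ w e)
    (helem : ∀ e ∈ 𝓔star, ∃ s ∈ 𝓢, e ∈ s ∧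
      (1 + ε)⁻¹ * c s ≤ ∑ e' ∈ s, w e' ∧ ∑ e' ∈ s, w e' ≤ c s)
    (𝓣 : Finset (Finset α))
    (h𝓣 : ∀ s, s ∈ 𝓣 ↔ s ∈ 𝓢 ∧
      (1 + ε)⁻¹ * c s ≤ ∑ e' ∈ s, w e' ∧ ∑ e' ∈ s, w e' ≤ c s) :
    ((1 + ε) * f)⁻¹ * ∑ s ∈ 𝓣, c s ≤ ∑ e ∈ 𝓔star, w e :=
  total_weight_ge_tight_cost_general 𝓢 𝓔star c hsub f hf ε hε w hw 𝓣 h𝓣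
end

section
/- Let 𝓢 be a finite collection of sets over a finite universe 𝓔* = A ⊎ P ⊎ D (a disjoint union of active, passive and dead elements), with positive set costs c_s, in which every element belongs to at most f sets of 𝓢, and let ε > 0. Let w be a nonnegative weight function on 𝓔* with W*(s) = ∑_{e∈s} w(e), and suppose: (i) every element e ∈ 𝓔* is contained in at least one set s with (1+ε)^{-1} c_s ≤ W*(s) ≤ c_s, and (ii) ∑_{e∈D} w(e) ≤ 2ε·∑_{e∈A} w(e). Then ∑_{e∈A∪P} w(e) ≥ ((1+ε)(1+2ε) f)^{-1} · c(𝓢*_tight), where 𝓢*_tight = {s ∈ 𝓢 : (1+ε)^{-1} c_s ≤ W*(s) ≤ c_s}. -/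
/-!
Each tight set costs at most `(1 + ε)` times its weight, and since every element lies in at
most `f` sets, the tight sets together weigh at most `f · w(𝓔*)`. The dead weight is at most
`2ε · w(A) ≤ 2ε · w(A ∪ P)`, so `w(𝓔*) ≤ (1 + 2ε) · w(A ∪ P)`.
-/

open Finset

namespace Finset

theorem sum_sum_le_nsmul_sum_of_card_filter_mem_le {α M : Type*} [DecidableEq α]
    [AddCommMonoid M] [PartialOrder M] [IsOrderedAddMonoid M]
    {s : Finset α} {B : Finset (Finset α)} {n : ℕ} {w : α → M}
    (hB : ∀ t ∈ B, t ⊆ s) (hw : ∀ a ∈ s, 0 ≤ w a) (h : ∀ a ∈ s, #{t ∈ B | a ∈ t} ≤ n) :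
    ∑ t ∈ B, ∑ a ∈ t, w a ≤ n • ∑ a ∈ s, w a :=
  calc ∑ t ∈ B, ∑ a ∈ t, w a
      = ∑ t ∈ B, ∑ a ∈ s, if a ∈ t then w a else 0 :=
        sum_congr rfl fun t ht => by rw [sum_ite_mem, inter_eq_right.2 (hB t ht)]
    _ = ∑ a ∈ s, #{t ∈ B | a ∈ t} • w a := by
        rw [sum_comm]
        exact sum_congr rfl fun a _ => by rw [← sum_filter, sum_const]
    _ ≤ ∑ a ∈ s, n • w a := sum_le_sum fun a ha => nsmul_le_nsmul_left (hw a ha) (h a ha)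
    _ = n • ∑ a ∈ s, w a := (smul_sum ..).symm

end Finset

theorem actual_weight_ge_tight_cost_general {α : Type*} [DecidableEq α]
    (𝓢 : Finset (Finset α)) (A P D : Finset α)
    (hAD : Disjoint A D) (hPD : Disjoint P D)
    (c : Finset α → ℝ)
    (hsub : ∀ s ∈ 𝓢, s ⊆ A ∪ P ∪ D)
    (f : ℕ)
    (hf : ∀ e ∈ A ∪ P ∪ D, (𝓢.filter (fun s => e ∈ s)).card ≤ f)
    (ε : ℝ) (hε : 0 < ε)
    (w : α → ℝ) (hw : ∀ e ∈ A ∪ P ∪ D, 0 ≤ w e)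
    (hdead : ∑ e ∈ D, w e ≤ 2 * ε * ∑ e ∈ A, w e)
    (𝓣 : Finset (Finset α))
    (h𝓣 : ∀ s, s ∈ 𝓣 ↔ s ∈ 𝓢 ∧
      (1 + ε)⁻¹ * c s ≤ ∑ e' ∈ s, w e' ∧ ∑ e' ∈ s, w e' ≤ c s) :
    ((1 + ε) * (1 + 2 * ε) * f)⁻¹ * ∑ s ∈ 𝓣, c s ≤ ∑ e ∈ A ∪ P, w e := by
  have hwAP : ∀ e ∈ A ∪ P, 0 ≤ w e := fun e he => hw e (mem_union_left _ he)
  have hcost : ∑ s ∈ 𝓣, c s ≤ (1 + ε) * ∑ s ∈ 𝓣, ∑ e ∈ s, w e := by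
    rw [mul_sum]
    exact sum_le_sum fun s hs => (inv_mul_le_iff₀ (by positivity)).1 ((h𝓣 s).1 hs).2.1
  have hcover : ∑ s ∈ 𝓣, ∑ e ∈ s, w e ≤ f * ∑ e ∈ A ∪ P ∪ D, w e := by
    rw [← nsmul_eq_mul]
    exact sum_sum_le_nsmul_sum_of_card_filter_mem_le (fun s hs => hsub s ((h𝓣 s).1 hs).1) hw
      fun e he => (card_le_card (filter_subset_filter _ fun s hs => ((h𝓣 s).1 hs).1)).trans
        (hf e he)
  have hdead' : ∑ e ∈ D, w e ≤ 2 * ε * ∑ e ∈ A ∪ P, w e :=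
    hdead.trans (mul_le_mul_of_nonneg_left
      (sum_le_sum_of_subset_of_nonneg subset_union_left fun e he _ => hwAP e he) (by positivity))
  have htotal : ∑ e ∈ A ∪ P ∪ D, w e ≤ (1 + 2 * ε) * ∑ e ∈ A ∪ P, w e := by
    rw [sum_union (disjoint_union_left.2 ⟨hAD, hPD⟩)]
    linarith
  refine inv_mul_le_of_le_mul₀ (by positivity) (sum_nonneg hwAP) ?_
  calc ∑ s ∈ 𝓣, c s ≤ (1 + ε) * (f * ∑ e ∈ A ∪ P ∪ D, w e) :=
        hcost.trans (mul_le_mul_of_nonneg_left hcover (by positivity))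
    _ ≤ (1 + ε) * (f * ((1 + 2 * ε) * ∑ e ∈ A ∪ P, w e)) := by gcongr
    _ = (1 + ε) * (1 + 2 * ε) * f * ∑ e ∈ A ∪ P, w e := by ring

/-- If `𝓔* = A ⊎ P ⊎ D`, every element of `𝓔*` lies in some tight set, and the total
dead weight satisfies `w(D) ≤ 2ε·w(A)`, then the weight of the actual elements `A ∪ P`
is at least `((1+ε)(1+2ε)·f)⁻¹` times the cost of the tight sets. -/
theorem actual_weight_ge_tight_cost {α : Type*} [DecidableEq α]
    (𝓢 : Finset (Finset α)) (A P D : Finset α)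
    (hAP : Disjoint A P) (hAD : Disjoint A D) (hPD : Disjoint P D)
    (c : Finset α → ℝ)
    (hsub : ∀ s ∈ 𝓢, s ⊆ A ∪ P ∪ D)
    (hc : ∀ s ∈ 𝓢, 0 < c s)
    (f : ℕ)
    (hf : ∀ e ∈ A ∪ P ∪ D, (𝓢.filter (fun s => e ∈ s)).card ≤ f)
    (ε : ℝ) (hε : 0 < ε)
    (w : α → ℝ) (hw : ∀ e ∈ A ∪ P ∪ D, 0 ≤ w e)
    (helem : ∀ e ∈ A ∪ P ∪ D, ∃ s ∈ 𝓢, e ∈ s ∧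
      (1 + ε)⁻¹ * c s ≤ ∑ e' ∈ s, w e' ∧ ∑ e' ∈ s, w e' ≤ c s)
    (hdead : ∑ e ∈ D, w e ≤ 2 * ε * ∑ e ∈ A, w e)
    (𝓣 : Finset (Finset α))
    (h𝓣 : ∀ s, s ∈ 𝓣 ↔ s ∈ 𝓢 ∧
      (1 + ε)⁻¹ * c s ≤ ∑ e' ∈ s, w e' ∧ ∑ e' ∈ s, w e' ≤ c s) :
    ((1 + ε) * (1 + 2 * ε) * f)⁻¹ * ∑ s ∈ 𝓣, c s ≤ ∑ e ∈ A ∪ P, w e :=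
  actual_weight_ge_tight_cost_general 𝓢 A P D hAD hPD c hsub f hf ε hε w hw hdead 𝓣 h𝓣
end
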